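/- arXiv:1811.00748 — 12 statements merged into one kernel-verified Lean document; each statement's English description precedes it below -/
import Mathlib

section
/- For all x in (0, π/2), cos x < e^(-x²/2). -/
open Real Set

lemma sin_ge_cubic : ∀ x : ℝ, 0 ≤ x → x - x^3/6 ≤ Real.sin x := by
  intro x hx
  have h : MonotoneOn (fun x : ℝ => Real.sin x - (x - x^3/6)) (Ici 0) := by
    apply monotoneOn_of_deriv_nonneg (convex_Ici 0)
    · fun_prop
    · fun_prop
    · intro t ht
      have hd : HasDerivAt (fun x : ℝ => Real.sin x - (x - x^3/6))
          (Real.cos t - (1 - (↑3 * t^2)/6)) t :=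
        (Real.hasDerivAt_sin t).sub ((hasDerivAt_id t).sub ((hasDerivAt_pow 3 t).div_const 6))
      rw [hd.deriv]
      have := Real.one_sub_sq_div_two_le_cos (x := t)
      linarith
  have h0 := h (self_mem_Ici) (mem_Ici.2 hx) hx
  simpa using h0

lemma cos_le_quartic : ∀ x : ℝ, 0 ≤ x → Real.cos x ≤ 1 - x^2/2 + x^4/24 := by
  intro x hx
  have h : MonotoneOn (fun x : ℝ => 1 - x^2/2 + x^4/24 - Real.cos x) (Ici 0) := by
    apply monotoneOn_of_deriv_nonneg (convex_Ici 0)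
    · fun_prop
    · fun_prop
    · intro t ht
      have ht0 : 0 ≤ t := le_of_lt (by simpa using ht)
      have hd : HasDerivAt (fun x : ℝ => 1 - x^2/2 + x^4/24 - Real.cos x)
          (0 - (↑2 * t^1)/2 + (↑4 * t^3)/24 - (-Real.sin t)) t :=
        (((hasDerivAt_const t (1:ℝ)).sub ((hasDerivAt_pow 2 t).div_const 2)).add
          ((hasDerivAt_pow 4 t).div_const 24)).sub (Real.hasDerivAt_cos t)
      rw [hd.deriv]
      have := sin_ge_cubic t ht0
      nlinarith
  have h0 := h (self_mem_Ici) (mem_Ici.2 hx) hx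
  simpa using h0

lemma exp_lt_quad : ∀ t : ℝ, t < 0 → Real.exp t < 1 + t + t^2/2 := by
  intro t ht
  have h : StrictAntiOn (fun t : ℝ => 1 + t + t^2/2 - Real.exp t) (Iic 0) := by
    apply strictAntiOn_of_deriv_neg (convex_Iic 0)
    · fun_prop
    · intro s hs
      have hs0 : s < 0 := by simpa using hs
      have hd : HasDerivAt (fun t : ℝ => 1 + t + t^2/2 - Real.exp t)
          (0 + 1 + (↑2 * s^1)/2 - Real.exp s) s :=
        (((hasDerivAt_const s (1:ℝ)).add (hasDerivAt_id s)).add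
          ((hasDerivAt_pow 2 s).div_const 2)).sub (Real.hasDerivAt_exp s)
      rw [hd.deriv]
      have := Real.add_one_lt_exp (x := s) hs0.ne
      linarith
  have h0 := h (mem_Iic.2 ht.le) (mem_Iic.2 le_rfl) ht
  simp only [Real.exp_zero] at h0
  linarith

lemma exp_gt_cubic : ∀ t : ℝ, t < 0 → 1 + t + t^2/2 + t^3/6 < Real.exp t := by
  intro t ht
  have h : StrictAntiOn (fun t : ℝ => Real.exp t - (1 + t + t^2/2 + t^3/6)) (Iic 0) := by
    apply strictAntiOn_of_deriv_neg (convex_Iic 0)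
    · fun_prop
    · intro s hs
      have hs0 : s < 0 := by simpa using hs
      have hd : HasDerivAt (fun t : ℝ => Real.exp t - (1 + t + t^2/2 + t^3/6))
          (Real.exp s - (0 + 1 + (↑2 * s^1)/2 + (↑3 * s^2)/6)) s :=
        (Real.hasDerivAt_exp s).sub
          ((((hasDerivAt_const s (1:ℝ)).add (hasDerivAt_id s)).add
            ((hasDerivAt_pow 2 s).div_const 2)).add ((hasDerivAt_pow 3 s).div_const 6))
      rw [hd.deriv]
      have := exp_lt_quad s hs0
      linarith
  have h0 := h (mem_Iic.2 ht.le) (mem_Iic.2 le_rfl) ht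
  simp only [Real.exp_zero] at h0
  linarith

theorem stmt_1 : ∀ x ∈ Set.Ioo (0:ℝ) (Real.pi/2), Real.cos x < Real.exp (-x^2/2) := by
  rintro x ⟨hx0, hx2⟩
  have h1 := cos_le_quartic x hx0.le
  have h2 := exp_gt_cubic (-x^2/2) (by nlinarith)
  have hx2' : x < 2 := lt_of_lt_of_le hx2 (by linarith [Real.pi_le_four])
  have hxsq : x^2 ≤ 4 := by nlinarith
  have hx6 : x^6 ≤ 4 * x^4 := by
    nlinarith [mul_le_mul_of_nonneg_left hxsq (pow_nonneg hx0.le 4)]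
  have hexp : 1 - x^2/2 + x^4/8 - x^6/48 < Real.exp (-x^2/2) := by
    have : 1 + -x^2/2 + (-x^2/2)^2/2 + (-x^2/2)^3/6 = 1 - x^2/2 + x^4/8 - x^6/48 := by ring
    linarith [this ▸ h2]
  linarith
end

section
/- For all x in (0, 1), e^(-a·x²) < cos x, where a = -log(cos 1) ≈ 0.615626. -/
/-! Equivalently, `log (cos 1) * x ^ 2 < log (cos x)`, which follows from `log (cos x) / x ^ 2`
being strictly decreasing on `(0, π/2)`. Its derivative is `-(x tan x + 2 log (cos x)) / x ^ 3`,
and `x tan x + 2 log (cos x)` vanishes at `0` and increases, its derivative being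
`x / cos² x - tan x = (2x - sin 2x) / (2 cos² x) > 0`. -/

open Real Set

lemma cos_pos_of_mem_Ico_zero_pi_div_two {x : ℝ} (hx : x ∈ Ico 0 (π / 2)) : 0 < cos x :=
  cos_pos_of_mem_Ioo ⟨by linarith [pi_pos, hx.1], hx.2⟩

lemma tan_lt_div_cos_sq {x : ℝ} (hx : 0 < x) (hc : cos x ≠ 0) : tan x < x / cos x ^ 2 := by
  have hsc : sin x * cos x < x := by
    have := sin_lt (by positivity : 0 < 2 * x)
    rw [sin_two_mul] at this
    linarith
  calc tan x = sin x * cos x / cos x ^ 2 := by rw [tan_eq_sin_div_cos]; field_simp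
    _ < x / cos x ^ 2 := by gcongr

lemma hasDerivAt_mul_tan_add_two_mul_log_cos {x : ℝ} (hc : cos x ≠ 0) :
    HasDerivAt (fun y => y * tan y + 2 * log (cos y)) (x / cos x ^ 2 - tan x) x := by
  refine (((hasDerivAt_id' x).mul (hasDerivAt_tan hc)).add
    (((hasDerivAt_cos x).log hc).const_mul 2)).congr_deriv ?_
  rw [tan_eq_sin_div_cos]
  field_simp
  ring

lemma strictMonoOn_mul_tan_add_two_mul_log_cos :
    StrictMonoOn (fun x => x * tan x + 2 * log (cos x)) (Ico 0 (π / 2)) := by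
  have hderiv : ∀ x ∈ Ico 0 (π / 2), HasDerivAt (fun y => y * tan y + 2 * log (cos y))
      (x / cos x ^ 2 - tan x) x := fun x hx =>
    hasDerivAt_mul_tan_add_two_mul_log_cos (cos_pos_of_mem_Ico_zero_pi_div_two hx).ne'
  refine strictMonoOn_of_hasDerivWithinAt_pos (f' := fun x => x / cos x ^ 2 - tan x)
    (convex_Ico 0 (π / 2))
    (fun x hx => (hderiv x hx).continuousAt.continuousWithinAt) (fun x hx => ?_) (fun x hx => ?_)
  all_goals rw [interior_Ico] at hx
  · exact (hderiv x (Ioo_subset_Ico_self hx)).hasDerivWithinAt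
  · exact sub_pos.2 <| tan_lt_div_cos_sq hx.1
      (cos_pos_of_mem_Ico_zero_pi_div_two (Ioo_subset_Ico_self hx)).ne'

lemma mul_tan_add_two_mul_log_cos_pos {x : ℝ} (hx : x ∈ Ioo 0 (π / 2)) :
    0 < x * tan x + 2 * log (cos x) := by
  simpa using strictMonoOn_mul_tan_add_two_mul_log_cos
    (left_mem_Ico.2 (by positivity)) (Ioo_subset_Ico_self hx) hx.1

lemma strictAntiOn_log_cos_div_sq :
    StrictAntiOn (fun x => log (cos x) / x ^ 2) (Ioo 0 (π / 2)) := by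
  have hderiv : ∀ x ∈ Ioo 0 (π / 2), HasDerivAt (fun y => log (cos y) / y ^ 2)
      (-(x * tan x + 2 * log (cos x)) / x ^ 3) x := by
    intro x hx
    have hc := (cos_pos_of_mem_Ico_zero_pi_div_two (Ioo_subset_Ico_self hx)).ne'
    have hx0 := hx.1
    refine (((hasDerivAt_cos x).log hc).div (hasDerivAt_pow 2 x) (by positivity)).congr_deriv ?_
    rw [tan_eq_sin_div_cos]
    field_simp
    ring
  refine strictAntiOn_of_hasDerivWithinAt_neg
    (f' := fun x => -(x * tan x + 2 * log (cos x)) / x ^ 3) (convex_Ioo 0 (π / 2))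
    (fun x hx => (hderiv x hx).continuousAt.continuousWithinAt) (fun x hx => ?_) (fun x hx => ?_)
  all_goals rw [interior_Ioo] at hx
  · exact (hderiv x hx).hasDerivWithinAt
  · have hx0 := hx.1
    exact div_neg_of_neg_of_pos (neg_neg_of_pos (mul_tan_add_two_mul_log_cos_pos hx))
      (by positivity)

theorem stmt_2 : ∀ x ∈ Set.Ioo (0:ℝ) 1,
    Real.exp (-(-Real.log (Real.cos 1)) * x^2) < Real.cos x := by
  rintro x ⟨hx0, hx1⟩
  have h1 : (1 : ℝ) < π / 2 := by linarith [pi_gt_three]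
  have hx : x ∈ Ioo 0 (π / 2) := ⟨hx0, hx1.trans h1⟩
  have hlog := strictAntiOn_log_cos_div_sq hx ⟨one_pos, h1⟩ hx1
  simp only [one_pow, div_one] at hlog
  rw [lt_div_iff₀ (by positivity)] at hlog
  calc exp (-(-log (cos 1)) * x ^ 2) = exp (log (cos 1) * x ^ 2) := by rw [neg_neg]
    _ < exp (log (cos x)) := exp_lt_exp.2 hlog
    _ = cos x := exp_log (cos_pos_of_mem_Ico_zero_pi_div_two (Ioo_subset_Ico_self hx))
end

section
/- For all x in (0, 1), x/tan x < e^(-x²/3). -/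
/-! The Taylor polynomial `1 - x²/3` of `x cot x` separates the two sides: `x cot x < 1 - x²/3`
because `f x = (3 - x²) sin x - 3x cos x` vanishes at `0` and has derivative
`x (sin x - x cos x) > 0`, while `1 - x²/3 < exp (-x²/3)` is `1 + t < exp t`. -/

open Real Set

namespace Real

lemma mul_cos_lt_sin {x : ℝ} (hx₀ : 0 < x) (hxπ : x < π) : x * cos x < sin x := by
  rcases lt_or_ge x (π / 2) with hx | hx
  · have hcos : 0 < cos x := cos_pos_of_mem_Ioo ⟨by linarith, hx⟩
    have := mul_lt_mul_of_pos_right (lt_tan hx₀ hx) hcos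
    rwa [tan_eq_sin_div_cos, div_mul_cancel₀ _ hcos.ne'] at this
  · have hcos : cos x ≤ 0 := cos_nonpos_of_pi_div_two_le_of_le hx (by linarith)
    nlinarith [sin_pos_of_pos_of_lt_pi hx₀ hxπ]

lemma hasDerivAt_three_sub_sq_mul_sin_sub_mul_cos (x : ℝ) :
    HasDerivAt (fun y => (3 - y ^ 2) * sin y - 3 * y * cos y)
      (x * (sin x - x * cos x)) x := by
  have hsin := ((hasDerivAt_pow 2 x).const_sub 3).fun_mul (hasDerivAt_sin x)
  have hcos := ((hasDerivAt_id' x).const_mul 3).fun_mul (hasDerivAt_cos x)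
  exact (hsin.fun_sub hcos).congr_deriv (by norm_num; ring)

lemma three_mul_mul_cos_lt {x : ℝ} (hx₀ : 0 < x) (hxπ : x < π) :
    3 * x * cos x < (3 - x ^ 2) * sin x := by
  set f : ℝ → ℝ := fun y => (3 - y ^ 2) * sin y - 3 * y * cos y
  have hmono : StrictMonoOn f (Icc 0 π) := by
    refine strictMonoOn_of_deriv_pos (convex_Icc 0 π) (by fun_prop) fun y hy => ?_
    rw [interior_Icc] at hy
    rw [(hasDerivAt_three_sub_sq_mul_sin_sub_mul_cos y).deriv]
    exact mul_pos hy.1 (sub_pos.2 (mul_cos_lt_sin hy.1 hy.2))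
  have := hmono ⟨le_rfl, pi_pos.le⟩ ⟨hx₀.le, hxπ.le⟩ hx₀
  simpa [f, sub_pos] using this

-- At `x = π / 2` the junk value `tan x = 0` makes the left side `0`, so the claim still holds.
lemma div_tan_lt_one_sub_sq_div_three {x : ℝ} (hx₀ : 0 < x) (hxπ : x < π) :
    x / tan x < 1 - x ^ 2 / 3 := by
  rw [tan_eq_sin_div_cos, div_div_eq_mul_div, div_lt_iff₀ (sin_pos_of_pos_of_lt_pi hx₀ hxπ)]
  linarith [three_mul_mul_cos_lt hx₀ hxπ]

end Real

theorem stmt_3 : ∀ x ∈ Set.Ioo (0:ℝ) 1, x / Real.tan x < Real.exp (-x^2/3) := by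
  rintro x ⟨hx₀, hx₁⟩
  have hcot := div_tan_lt_one_sub_sq_div_three hx₀ (by linarith [pi_gt_three])
  have hexp := add_one_lt_exp (show -x ^ 2 / 3 ≠ 0 by nlinarith)
  linarith
end

section
/- For all x in (0, π/2), x/tan x < e^(-x²/3). -/
/-!
Since `1 + t < exp t` for `t ≠ 0`, it suffices to show `x cot x ≤ 1 - x²/3`, i.e.
`x cos x ≤ (1 - x²/3) sin x`. This follows from the Taylor bounds `x - x³/6 ≤ sin x` and
`cos x ≤ 1 - x²/2 + x⁴/24`: the product `(1 - x²/3)(x - x³/6)` exceeds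
`x (1 - x²/2 + x⁴/24)` by `x⁵/72`.
-/

open Real

theorem Real.cos_le_one_sub_sq_div_two_add_pow_four_div_24 (x : ℝ) :
    cos x ≤ 1 - x ^ 2 / 2 + x ^ 4 / 24 := by
  rcases le_or_gt (x ^ 2) 24 with hx | hx
  · -- `cos x = 1 - 2 sin² y` with `y = |x|/2`, and `sin y ≥ y - y³/6 ≥ 0` while `y² ≤ 6`.
    set y := |x| / 2 with hy_def
    have hy : 0 ≤ y := by positivity
    have hx2 : x ^ 2 = 4 * y ^ 2 := by rw [hy_def, div_pow, sq_abs]; ring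
    have hx4 : x ^ 4 = 16 * y ^ 4 := by rw [← Even.pow_abs (by decide), hy_def]; ring
    have h_cos : cos x = 1 - 2 * sin y ^ 2 := by
      rw [← cos_abs, show |x| = 2 * y by rw [hy_def]; ring, cos_two_mul, cos_sq']
      ring
    have h_sin : y - y ^ 3 / 6 ≤ sin y := sin_ge_sub_cube hy
    have h_nonneg : 0 ≤ y - y ^ 3 / 6 := by nlinarith
    rw [h_cos, hx2, hx4]
    nlinarith [mul_le_mul h_sin h_sin h_nonneg (h_nonneg.trans h_sin), pow_nonneg hy 6]
  · nlinarith [cos_le_one x]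

theorem Real.mul_cos_le_one_sub_sq_div_three_mul_sin {x : ℝ} (hx₀ : 0 ≤ x) (hx : x ^ 2 ≤ 3) :
    x * cos x ≤ (1 - x ^ 2 / 3) * sin x :=
  calc x * cos x ≤ x * (1 - x ^ 2 / 2 + x ^ 4 / 24) :=
        mul_le_mul_of_nonneg_left (cos_le_one_sub_sq_div_two_add_pow_four_div_24 x) hx₀
    _ ≤ (1 - x ^ 2 / 3) * (x - x ^ 3 / 6) := by nlinarith [pow_nonneg hx₀ 5]
    _ ≤ (1 - x ^ 2 / 3) * sin x :=
        mul_le_mul_of_nonneg_left (sin_ge_sub_cube hx₀) (by linarith)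

theorem Real.div_tan_le_one_sub_sq_div_three {x : ℝ} (hx₀ : 0 < x) (hx : x < π / 2) :
    x / tan x ≤ 1 - x ^ 2 / 3 := by
  have h_sin : 0 < sin x := sin_pos_of_pos_of_lt_pi hx₀ (by linarith [pi_pos])
  have h_sq : x ^ 2 ≤ 3 := by nlinarith [pi_lt_d2]
  rw [tan_eq_sin_div_cos, div_div_eq_mul_div, div_le_iff₀ h_sin]
  exact mul_cos_le_one_sub_sq_div_three_mul_sin hx₀.le h_sq

theorem stmt_4 : ∀ x ∈ Set.Ioo (0:ℝ) (Real.pi/2), x / Real.tan x < Real.exp (-x^2/3) := by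
  rintro x ⟨hx₀, hx⟩
  calc x / tan x ≤ 1 - x ^ 2 / 3 := div_tan_le_one_sub_sq_div_three hx₀ hx
    _ = -x ^ 2 / 3 + 1 := by ring
    _ < exp (-x ^ 2 / 3) := add_one_lt_exp (by simp [hx₀.ne'])
end

section
/- For all x in (0, 1), e^(-b·x²) < x/tan x, where b = log(tan 1) ≈ 0.443023. -/
/-!
Taking logarithms, the claim is `φ x < φ 1` for `φ x = log (tan x / x) / x ^ 2`, because
`φ 1 = log (tan 1)`. So it suffices that `φ` is strictly increasing on `(0, π/2)`. Bounding
`log (tan x / x)` by `tan x / x - 1` reduces the sign of `φ'` to the trigonometric inequality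
`2 sin² x ≤ x² + x sin x cos x`. With `u = 2x` this reads `4 - 4 cos u ≤ u² + u sin u`; the two sides
agree to order six at `0`, and the inequality follows by differentiating three times down to
`u cos u ≤ sin u` on `[0, π]`.
-/

open Real Set

theorem monotoneOn_Icc_of_hasDerivAt_nonneg {f f' : ℝ → ℝ} {a b : ℝ}
    (hf : ∀ x, HasDerivAt f (f' x) x) (hf' : ∀ x ∈ Ioo a b, 0 ≤ f' x) :
    MonotoneOn f (Icc a b) :=
  monotoneOn_of_hasDerivWithinAt_nonneg (convex_Icc a b)
    (fun x _ => (hf x).continuousAt.continuousWithinAt)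
    (fun x _ => (hf x).hasDerivWithinAt) (by simpa only [interior_Icc] using hf')

namespace Real

variable {u : ℝ}

theorem mul_cos_le_sin (hu : u ∈ Icc 0 π) : u * cos u ≤ sin u := by
  have hd (t : ℝ) : HasDerivAt (fun t => sin t - t * cos t) (t * sin t) t :=
    ((hasDerivAt_sin t).sub ((hasDerivAt_id' t).mul (hasDerivAt_cos t))).congr_deriv (by ring)
  have h := monotoneOn_Icc_of_hasDerivAt_nonneg hd
    (fun t ht => mul_nonneg ht.1.le (sin_nonneg_of_nonneg_of_le_pi ht.1.le ht.2.le))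
    (left_mem_Icc.2 pi_pos.le) hu hu.1
  simp only [sin_zero, cos_zero, zero_mul, sub_zero] at h
  linarith

theorem mul_sin_le_two_sub_two_mul_cos (hu : u ∈ Icc 0 π) : u * sin u ≤ 2 - 2 * cos u := by
  have hd (t : ℝ) : HasDerivAt (fun t => 2 - 2 * cos t - t * sin t) (sin t - t * cos t) t :=
    (((hasDerivAt_cos t).const_mul 2).const_sub 2 |>.sub
      ((hasDerivAt_id' t).mul (hasDerivAt_sin t))).congr_deriv (by ring)
  have h := monotoneOn_Icc_of_hasDerivAt_nonneg hd
    (fun t ht => sub_nonneg.2 (mul_cos_le_sin (Ioo_subset_Icc_self ht)))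
    (left_mem_Icc.2 pi_pos.le) hu hu.1
  simp only [sin_zero, cos_zero, mul_zero] at h
  linarith

theorem three_mul_sin_le (hu : u ∈ Icc 0 π) : 3 * sin u ≤ 2 * u + u * cos u := by
  have hd (t : ℝ) : HasDerivAt (fun t => 2 * t + t * cos t - 3 * sin t)
      (2 - 2 * cos t - t * sin t) t :=
    ((((hasDerivAt_id' t).const_mul 2).add ((hasDerivAt_id' t).mul (hasDerivAt_cos t))).sub
      ((hasDerivAt_sin t).const_mul 3)).congr_deriv (by ring)
  have h := monotoneOn_Icc_of_hasDerivAt_nonneg hd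
    (fun t ht => sub_nonneg.2 (mul_sin_le_two_sub_two_mul_cos (Ioo_subset_Icc_self ht)))
    (left_mem_Icc.2 pi_pos.le) hu hu.1
  simp only [sin_zero, cos_zero, mul_zero] at h
  linarith

theorem four_sub_four_mul_cos_le (hu : u ∈ Icc 0 π) : 4 - 4 * cos u ≤ u ^ 2 + u * sin u := by
  have hd (t : ℝ) : HasDerivAt (fun t => t ^ 2 + t * sin t - 4 + 4 * cos t)
      (2 * t + t * cos t - 3 * sin t) t :=
    ((((hasDerivAt_pow 2 t).add ((hasDerivAt_id' t).mul (hasDerivAt_sin t))).sub_const 4).add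
      ((hasDerivAt_cos t).const_mul 4)).congr_deriv (by ring)
  have h := monotoneOn_Icc_of_hasDerivAt_nonneg hd
    (fun t ht => sub_nonneg.2 (three_mul_sin_le (Ioo_subset_Icc_self ht)))
    (left_mem_Icc.2 pi_pos.le) hu hu.1
  simp only [sin_zero, cos_zero, mul_zero] at h
  linarith

theorem two_mul_sin_sq_le {x : ℝ} (hx : x ∈ Icc 0 (π / 2)) :
    2 * sin x ^ 2 ≤ x ^ 2 + x * sin x * cos x := by
  have h := four_sub_four_mul_cos_le (u := 2 * x) ⟨by linarith [hx.1], by linarith [hx.2]⟩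
  rw [sin_two_mul, cos_two_mul, cos_sq'] at h
  linarith

theorem two_mul_tan_div_sub_one_le {x : ℝ} (hx : x ∈ Ioo 0 (π / 2)) :
    2 * (tan x / x - 1) ≤ x * (1 / cos x ^ 2 / tan x - 1 / x) := by
  have hsin : 0 < sin x := sin_pos_of_pos_of_lt_pi hx.1 (by linarith [hx.2, pi_pos])
  have hcos : 0 < cos x := cos_pos_of_mem_Ioo ⟨by linarith [hx.1, pi_pos], hx.2⟩
  have hx0 : x ≠ 0 := hx.1.ne'
  rw [tan_eq_sin_div_cos]
  field_simp
  rw [div_le_div_iff_of_pos_right hx.1]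
  nlinarith [two_mul_sin_sq_le (Ioo_subset_Icc_self hx)]

theorem strictMonoOn_log_tan_sub_log_div_sq :
    StrictMonoOn (fun x => (log (tan x) - log x) / x ^ 2) (Ioo 0 (π / 2)) := by
  have hd : ∀ x ∈ Ioo 0 (π / 2), HasDerivAt (fun x => (log (tan x) - log x) / x ^ 2)
      (((1 / cos x ^ 2 / tan x - 1 / x) * x ^ 2 - (log (tan x) - log x) * (2 * x)) / (x ^ 2) ^ 2)
      x := by
    intro x hx
    have hcos : cos x ≠ 0 := (cos_pos_of_mem_Ioo ⟨by linarith [hx.1, pi_pos], hx.2⟩).ne'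
    have htan : tan x ≠ 0 := (tan_pos_of_pos_of_lt_pi_div_two hx.1 hx.2).ne'
    have hlog : HasDerivAt log (1 / x) x := by simpa using hasDerivAt_log hx.1.ne'
    have hsq : HasDerivAt (fun x => x ^ 2) (2 * x) x := by simpa using hasDerivAt_pow 2 x
    exact (((hasDerivAt_tan hcos).log htan).sub hlog).div hsq (pow_ne_zero 2 hx.1.ne')
  refine strictMonoOn_of_hasDerivWithinAt_pos (convex_Ioo 0 (π / 2))
    (fun x hx => (hd x hx).continuousAt.continuousWithinAt)
    (fun x hx => (hd x (interior_subset hx)).hasDerivWithinAt) fun x hx => ?_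
  rw [interior_Ioo] at hx
  have htan : x < tan x := lt_tan hx.1 hx.2
  have hlog : log (tan x) - log x < tan x / x - 1 := by
    rw [← log_div (hx.1.trans htan).ne' hx.1.ne']
    exact log_lt_sub_one_of_pos (div_pos (hx.1.trans htan) hx.1) ((one_lt_div hx.1).2 htan).ne'
  have hkey := two_mul_tan_div_sub_one_le hx
  apply div_pos _ (pow_pos (pow_pos hx.1 2) 2)
  nlinarith [hx.1]

end Real

theorem stmt_5 : ∀ x ∈ Set.Ioo (0:ℝ) 1,
    Real.exp (-(Real.log (Real.tan 1)) * x^2) < x / Real.tan x := by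
  intro x hx
  have h1 : (1 : ℝ) < π / 2 := by linarith [pi_gt_three]
  have hlt := strictMonoOn_log_tan_sub_log_div_sq ⟨hx.1, hx.2.trans h1⟩ ⟨one_pos, h1⟩ hx.2
  simp only [log_one, sub_zero, one_pow, div_one] at hlt
  have htan : 0 < tan x := tan_pos_of_pos_of_lt_pi_div_two hx.1 (hx.2.trans h1)
  rw [← lt_log_iff_exp_lt (div_pos hx.1 htan), log_div hx.1.ne' htan.ne']
  rw [div_lt_iff₀ (pow_pos hx.1 2)] at hlt
  linarith
end

section
/- For all x in (0, π/2), -x²/2 - log(cos x) > 0. -/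
open Real Set

/-!
The function `f x = -x ^ 2 / 2 - log (cos x)` vanishes at `0` and has derivative
`tan x - x`, which is positive on `(0, π / 2)`; hence `f` is strictly increasing there.
-/

namespace Real

theorem hasDerivAt_log_cos {x : ℝ} (hx : cos x ≠ 0) :
    HasDerivAt (fun y ↦ log (cos y)) (-tan x) x := by
  convert (hasDerivAt_cos x).log hx using 1
  rw [tan_eq_sin_div_cos, neg_div]

theorem hasDerivAt_neg_sq_div_two_sub_log_cos {x : ℝ} (hx : cos x ≠ 0) :
    HasDerivAt (fun y ↦ -y ^ 2 / 2 - log (cos y)) (tan x - x) x := by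
  refine (((hasDerivAt_pow 2 x).neg.div_const 2).sub (hasDerivAt_log_cos hx)).congr_deriv ?_
  norm_num
  ring

theorem strictMonoOn_neg_sq_div_two_sub_log_cos :
    StrictMonoOn (fun y ↦ -y ^ 2 / 2 - log (cos y)) (Ico 0 (π / 2)) := by
  have hderiv : ∀ y ∈ Ico 0 (π / 2),
      HasDerivAt (fun y ↦ -y ^ 2 / 2 - log (cos y)) (tan y - y) y := fun y hy ↦
    hasDerivAt_neg_sq_div_two_sub_log_cos
      (cos_pos_of_mem_Ioo ⟨by linarith [pi_pos, hy.1], hy.2⟩).ne'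
  refine strictMonoOn_of_hasDerivWithinAt_pos (f' := fun y ↦ tan y - y) (convex_Ico 0 (π / 2))
    (fun y hy ↦ (hderiv y hy).continuousAt.continuousWithinAt) (fun y hy ↦ ?_) (fun y hy ↦ ?_)
    <;> rw [interior_Ico] at hy
  · exact (hderiv y (Ioo_subset_Ico_self hy)).hasDerivWithinAt
  · exact sub_pos.mpr (lt_tan hy.1 hy.2)

end Real

theorem stmt_6 : ∀ x ∈ Set.Ioo (0:ℝ) (Real.pi/2), -x^2/2 - Real.log (Real.cos x) > 0 := by
  intro x hx
  simpa using strictMonoOn_neg_sq_div_two_sub_log_cos ⟨le_rfl, by positivity⟩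
    (Ioo_subset_Ico_self hx) hx.1
end

section
/- Fix x₀ in (0, π/2) and let a = -log(cos x₀)/x₀². Then a > 1/2. -/
/-!
`-log (cos t) - t ^ 2 / 2` vanishes at `0` and has derivative `tan t - t > 0` on `(0, π/2)`,
so it is positive there.
-/

open Real Set

lemma hasDerivAt_neg_log_cos_sub_sq_div_two {t : ℝ} (ht : cos t ≠ 0) :
    HasDerivAt (fun t => -log (cos t) - t ^ 2 / 2) (tan t - t) t := by
  have hlog := ((hasDerivAt_cos t).log ht).neg
  have hsq : HasDerivAt (fun t : ℝ => t ^ 2 / 2) t t := by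
    simpa using (hasDerivAt_pow 2 t).div_const 2
  refine (hlog.sub hsq).congr_deriv ?_
  rw [tan_eq_sin_div_cos]
  ring

lemma strictMonoOn_neg_log_cos_sub_sq_div_two :
    StrictMonoOn (fun t => -log (cos t) - t ^ 2 / 2) (Ico 0 (π / 2)) := by
  have hcos : ∀ t ∈ Ico 0 (π / 2), cos t ≠ 0 := fun t ht =>
    (cos_pos_of_mem_Ioo ⟨by linarith [ht.1, pi_pos], ht.2⟩).ne'
  apply strictMonoOn_of_deriv_pos (convex_Ico 0 (π / 2))
  · exact fun t ht =>
      (hasDerivAt_neg_log_cos_sub_sq_div_two (hcos t ht)).continuousAt.continuousWithinAt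
  · intro t ht
    rw [interior_Ico] at ht
    rw [(hasDerivAt_neg_log_cos_sub_sq_div_two (hcos t (Ioo_subset_Ico_self ht))).deriv]
    linarith [lt_tan ht.1 ht.2]

lemma sq_div_two_lt_neg_log_cos {x : ℝ} (hx₀ : 0 < x) (hx : x < π / 2) :
    x ^ 2 / 2 < -log (cos x) := by
  have := strictMonoOn_neg_log_cos_sub_sq_div_two ⟨le_rfl, by linarith⟩ ⟨hx₀.le, hx⟩ hx₀
  simp only [cos_zero, log_one] at this
  linarith

theorem stmt_9 (x₀ : ℝ) (hx₀ : x₀ ∈ Set.Ioo (0:ℝ) (Real.pi/2)) :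
    -Real.log (Real.cos x₀) / x₀^2 > 1/2 := by
  have hsq : 0 < x₀ ^ 2 := pow_pos hx₀.1 2
  rw [gt_iff_lt, lt_div_iff₀ hsq]
  linarith [sq_div_two_lt_neg_log_cos hx₀.1 hx₀.2]
end

section
/- Fix x₀ in (0, π/2) and let b = -log(x₀/tan x₀)/x₀². Then b > 1/3. -/
/-!
The Padé-type bound `tan x > 3x / (3 - x²)` on `(0, π/2)` holds because
`sin x (3 - x²) - 3x cos x` vanishes at `0` and has derivative `x (sin x - x cos x) > 0`.
It gives `tan x / x > 1 / (1 - x²/3)`, which exceeds `exp (x²/3)` because `exp t < 1 / (1 - t)`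
for `0 < t < 1`. Taking logarithms, `log (tan x / x) > x² / 3`.
-/

open Real Set

lemma mul_cos_lt_sin {x : ℝ} (h0 : 0 < x) (hx : x < π / 2) : x * cos x < sin x := by
  have hcos : 0 < cos x := cos_pos_of_mem_Ioo ⟨by linarith [pi_pos], hx⟩
  simpa [tan_eq_sin_div_cos, lt_div_iff₀ hcos] using lt_tan h0 hx

lemma hasDerivAt_sin_mul_three_sub_sq_sub_three_mul_mul_cos (x : ℝ) :
    HasDerivAt (fun y => sin y * (3 - y ^ 2) - 3 * y * cos y) (x * (sin x - x * cos x)) x := by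
  have := ((hasDerivAt_sin x).mul ((hasDerivAt_pow 2 x).const_sub 3)).sub
    (((hasDerivAt_id' x).const_mul 3).mul (hasDerivAt_cos x))
  exact this.congr_deriv (by push_cast; ring)

lemma three_mul_mul_cos_lt_sin_mul_three_sub_sq {x : ℝ} (h0 : 0 < x) (hx : x < π / 2) :
    3 * x * cos x < sin x * (3 - x ^ 2) := by
  have hmono : StrictMonoOn (fun y => sin y * (3 - y ^ 2) - 3 * y * cos y) (Icc 0 (π / 2)) := by
    refine strictMonoOn_of_deriv_pos (convex_Icc _ _) (by fun_prop) fun y hy => ?_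
    rw [interior_Icc] at hy
    rw [(hasDerivAt_sin_mul_three_sub_sq_sub_three_mul_mul_cos y).deriv]
    exact mul_pos hy.1 (sub_pos.2 (mul_cos_lt_sin hy.1 hy.2))
  have := hmono ⟨le_rfl, by positivity⟩ ⟨h0.le, hx.le⟩ h0
  simp only [sin_zero, zero_mul, mul_zero, sub_zero] at this
  linarith

lemma sq_lt_three_of_lt_pi_div_two {x : ℝ} (h0 : 0 < x) (hx : x < π / 2) : x ^ 2 < 3 := by
  nlinarith [pi_lt_d2]

lemma three_div_three_sub_sq_lt_tan_div {x : ℝ} (h0 : 0 < x) (hx : x < π / 2) :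
    3 / (3 - x ^ 2) < tan x / x := by
  have hcos : 0 < cos x := cos_pos_of_mem_Ioo ⟨by linarith [pi_pos], hx⟩
  have hsq := sq_lt_three_of_lt_pi_div_two h0 hx
  rw [tan_eq_sin_div_cos, div_div, div_lt_div_iff₀ (by linarith) (by positivity)]
  nlinarith [three_mul_mul_cos_lt_sin_mul_three_sub_sq h0 hx]

theorem stmt_11 (x₀ : ℝ) (hx₀ : x₀ ∈ Set.Ioo (0:ℝ) (Real.pi/2)) :
    -Real.log (x₀ / Real.tan x₀) / x₀^2 > 1/3 := by
  obtain ⟨h0, hx⟩ := hx₀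
  have hsq := sq_lt_three_of_lt_pi_div_two h0 hx
  have hexp : exp (x₀ ^ 2 / 3) < tan x₀ / x₀ :=
    calc exp (x₀ ^ 2 / 3) < 1 / (1 - x₀ ^ 2 / 3) :=
          exp_bound_div_one_sub_of_interval' (by positivity) (by linarith)
      _ = 3 / (3 - x₀ ^ 2) := by field_simp
      _ < tan x₀ / x₀ := three_div_three_sub_sq_lt_tan_div h0 hx
  have hlog : x₀ ^ 2 / 3 < log (tan x₀ / x₀) :=
    (lt_log_iff_exp_lt (div_pos (tan_pos_of_pos_of_lt_pi_div_two h0 hx) h0)).2 hexp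
  rw [← log_inv, inv_div, gt_iff_lt, lt_div_iff₀ (by positivity)]
  linarith
end

section
/- The constant 1/2 in the inequality cos x < e^(-c·x²) for all x in (0, x₀) is best possible: if cos x < e^(-c·x²) holds for all x in (0, x₀) ⊆ (0, π/2), then c ≤ 1/2. -/
theorem stmt_12 (x₀ c : ℝ) (hx₀ : x₀ ∈ Set.Ioo (0:ℝ) (Real.pi/2))
    (h : ∀ x ∈ Set.Ioo 0 x₀, Real.cos x < Real.exp (-c * x^2)) : c ≤ 1/2 := by
  by_contra hc
  push_neg at hc
  have hcpos : 0 < c := by linarith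
  set x : ℝ := min (x₀/2) (Real.sqrt ((c - 1/2)/c)) with hxdef
  have hx0 : 0 < x := by
    apply lt_min (by linarith [hx₀.1])
    exact Real.sqrt_pos.mpr (div_pos (by linarith) hcpos)
  have hxlt : x < x₀ := lt_of_le_of_lt (min_le_left _ _) (by linarith [hx₀.1])
  have hxsq : x^2 ≤ (c - 1/2)/c := by
    have := min_le_right (x₀/2) (Real.sqrt ((c - 1/2)/c))
    calc x^2 ≤ (Real.sqrt ((c - 1/2)/c))^2 := by
          apply pow_le_pow_left₀ hx0.le this
      _ = (c - 1/2)/c := Real.sq_sqrt (div_pos (by linarith) hcpos).le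
  have h1 : 1 - x^2/2 ≤ Real.cos x := Real.one_sub_sq_div_two_le_cos
  have h2 : Real.exp (-c * x^2) ≤ 1/(1 + c * x^2) := by
    rw [le_div_iff₀ (by positivity)]
    have := Real.add_one_le_exp (c * x^2)
    calc Real.exp (-c * x^2) * (1 + c * x^2) ≤ Real.exp (-c * x^2) * Real.exp (c * x^2) := by
          apply mul_le_mul_of_nonneg_left (by linarith) (Real.exp_pos _).le
      _ = 1 := by rw [← Real.exp_add]; ring_nf; exact Real.exp_zero
  have h3 := h x ⟨hx0, hxlt⟩
  have h4 : (1 - x^2/2) * (1 + c * x^2) < 1 := by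
    have := lt_of_le_of_lt h1 (lt_of_lt_of_le h3 h2)
    rw [lt_div_iff₀ (by positivity)] at this
    linarith
  -- expand: c x² - x²/2 - c x⁴/2 < 0 ⇒ c - 1/2 < c x²/2
  have h5 : c - 1/2 < c * x^2 / 2 := by
    have hx2pos : 0 < x^2 := by positivity
    nlinarith
  have h6 : c * x^2 ≤ c - 1/2 := by
    have := mul_le_mul_of_nonneg_left hxsq hcpos.le
    rwa [mul_div_cancel₀ _ (ne_of_gt hcpos)] at this
  linarith
end

section
/- The constant 1/3 in x/tan x < e^(-c·x²) for all x in (0, x₀) is best possible: if x/tan x < e^(-c·x²) holds for all x in (0, x₀) ⊆ (0, π/2), then c ≤ 1/3. -/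
/-!
Near `0` we have `x / tan x ≥ 1 - x²/3 - x⁴/5` (from the Taylor bounds on `sin` and `cos`) and
`exp (-c x²) ≤ 1 / (1 + c x²)`. For `c ≥ 0` the hypothesis therefore forces
`c - 1/3 ≤ x² (1/5 + c/3 + c x²/5)` for all small `x > 0`, and letting `x → 0⁺` gives `c ≤ 1/3`.
-/

open Real Filter Topology

theorem Real.sin_le_sub_cube_add {x : ℝ} (hx₀ : 0 ≤ x) (hx : x ≤ 1) :
    sin x ≤ x - x ^ 3 / 6 + x ^ 5 / 100 := by
  have := (abs_le.1 (sin_bound (x := x) (by rwa [abs_of_nonneg hx₀]))).2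
  rw [abs_of_nonneg hx₀] at this
  linarith

theorem Real.one_sub_sq_div_three_sub_le_div_tan {x : ℝ} (hx₀ : 0 < x) (hx : x ≤ 1) :
    1 - x ^ 2 / 3 - x ^ 4 / 5 ≤ x / tan x := by
  have hsin : 0 < sin x := sin_pos_of_pos_of_lt_pi hx₀ (by linarith [pi_gt_three])
  rw [tan_eq_sin_div_cos, div_div_eq_mul_div, le_div_iff₀ hsin]
  have hx2 : x ^ 2 ≤ 1 := pow_le_one₀ hx₀.le hx
  have hrem : 0 ≤ x ^ 5 * (121 / 900 - 3 * x ^ 2 / 100 + x ^ 4 / 500) :=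
    mul_nonneg (by positivity) (by nlinarith)
  calc (1 - x ^ 2 / 3 - x ^ 4 / 5) * sin x
      ≤ (1 - x ^ 2 / 3 - x ^ 4 / 5) * (x - x ^ 3 / 6 + x ^ 5 / 100) :=
        mul_le_mul_of_nonneg_left (sin_le_sub_cube_add hx₀.le hx) (by nlinarith)
    _ = x * (1 - x ^ 2 / 2) - x ^ 5 * (121 / 900 - 3 * x ^ 2 / 100 + x ^ 4 / 500) := by ring
    _ ≤ x * cos x := by
        linarith [mul_le_mul_of_nonneg_left (one_sub_sq_div_two_le_cos (x := x)) hx₀.le]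

theorem Real.one_add_mul_exp_neg_le (a : ℝ) : (1 + a) * exp (-a) ≤ 1 := by
  rw [← le_div_iff₀ (exp_pos _), exp_neg, div_inv_eq_mul, one_mul]
  linarith [add_one_le_exp a]

theorem Real.sub_one_div_three_le_of_div_tan_lt_exp {c x : ℝ} (hc : 0 ≤ c) (hx₀ : 0 < x)
    (hx : x ≤ 1) (h : x / tan x < exp (-c * x ^ 2)) :
    c - 1 / 3 ≤ x ^ 2 * (1 / 5 + c / 3 + c * x ^ 2 / 5) := by
  have hlt := (one_sub_sq_div_three_sub_le_div_tan hx₀ hx).trans_lt h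
  have hexp := one_add_mul_exp_neg_le (c * x ^ 2)
  rw [← neg_mul] at hexp
  have : (1 - x ^ 2 / 3 - x ^ 4 / 5) * (1 + c * x ^ 2) ≤ 1 := by
    nlinarith [mul_lt_mul_of_pos_left hlt (by positivity : 0 < 1 + c * x ^ 2)]
  have hx2 : 0 < x ^ 2 := by positivity
  nlinarith

theorem stmt_14 (x₀ c : ℝ) (hx₀ : x₀ ∈ Set.Ioo (0:ℝ) (Real.pi/2))
    (h : ∀ x ∈ Set.Ioo 0 x₀, x / Real.tan x < Real.exp (-c * x^2)) : c ≤ 1/3 := by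
  by_contra! hc
  have hlim : Tendsto (fun x : ℝ => x ^ 2 * (1 / 5 + c / 3 + c * x ^ 2 / 5)) (𝓝[>] 0) (𝓝 0) := by
    have : Continuous (fun x : ℝ => x ^ 2 * (1 / 5 + c / 3 + c * x ^ 2 / 5)) := by fun_prop
    simpa using (this.tendsto 0).mono_left nhdsWithin_le_nhds
  have hbound : ∀ᶠ x in 𝓝[>] 0, c - 1 / 3 ≤ x ^ 2 * (1 / 5 + c / 3 + c * x ^ 2 / 5) := by
    filter_upwards [Ioo_mem_nhdsGT (lt_min hx₀.1 one_pos)] with x ⟨hx0, hx⟩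
    exact sub_one_div_three_le_of_div_tan_lt_exp (by linarith) hx0
      (hx.le.trans (min_le_right _ _)) (h x ⟨hx0, hx.trans_le (min_le_left _ _)⟩)
  linarith [ge_of_tendsto hlim hbound]
end

section
/- Let f : (0, c) → ℝ be m times differentiable (m ≥ 2) with f⁽ᵐ⁾ > 0 on (0, c), f, f', ..., f⁽ᵐ⁻¹⁾ negative near 0 and positive near c. Then f has exactly one local minimum in (0, c), attained at some t₀ with f(t₀) < 0 and t₀ < x₀, where x₀ is the unique zero of f. -/
/-!
Descending induction on `k`: every `f⁽ᵏ⁾`, `k < m`, changes sign exactly once on `(0, c)`,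
from negative to positive. For `k = m - 1` this holds because `f⁽ᵐ⁻¹⁾` is strictly increasing.
If `f⁽ᵏ⁺¹⁾` changes sign at `s`, then `f⁽ᵏ⁾` decreases on `(0, s]`, so it stays negative there,
and increases strictly on `[s, c)`; being positive near `c`, it crosses zero exactly once, at
some point beyond `s`. For `k = 1` the crossing point is the minimum `t₀` of `f`, and for `k = 0`
it is the zero `x₀ > t₀`.
-/

open Set Filter Topology

def SignChangeAt (g : ℝ → ℝ) (c t : ℝ) : Prop :=
  t ∈ Ioo 0 c ∧ (∀ x ∈ Ioo 0 t, g x < 0) ∧ g t = 0 ∧ ∀ x ∈ Ioo t c, 0 < g x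

namespace SignChangeAt

variable {g : ℝ → ℝ} {c t : ℝ}

theorem eq_of_apply_eq_zero (h : SignChangeAt g c t) {y : ℝ} (hy : y ∈ Ioo 0 c)
    (hgy : g y = 0) : y = t := by
  obtain ⟨-, hneg, -, hpos⟩ := h
  rcases lt_trichotomy y t with hyt | rfl | hty
  · exact absurd hgy (hneg y ⟨hy.1, hyt⟩).ne
  · rfl
  · exact absurd hgy (hpos y ⟨hty, hy.2⟩).ne'

theorem strictAntiOn_of_deriv (h : SignChangeAt (deriv g) c t) (hg : ContinuousOn g (Ioo 0 c)) :
    StrictAntiOn g (Ioc 0 t) :=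
  strictAntiOn_of_deriv_neg (convex_Ioc 0 t) (hg.mono (Ioc_subset_Ioo_right h.1.2))
    (by simpa only [interior_Ioc] using h.2.1)

theorem strictMonoOn_of_deriv (h : SignChangeAt (deriv g) c t) (hg : ContinuousOn g (Ioo 0 c)) :
    StrictMonoOn g (Ico t c) :=
  strictMonoOn_of_deriv_pos (convex_Ico t c) (hg.mono (Ico_subset_Ioo_left h.1.1))
    (by simpa only [interior_Ico] using h.2.2.2)

end SignChangeAt

theorem exists_signChangeAt {g : ℝ → ℝ} {c s : ℝ} (hc : 0 < c) (hg : ContinuousOn g (Ioo 0 c))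
    (hanti : AntitoneOn g (Ioc 0 s)) (hmono : StrictMonoOn g (Ioo s c))
    (h0 : ∀ᶠ x in 𝓝[>] 0, g x < 0) (h1 : ∀ᶠ x in 𝓝[<] c, 0 < g x) :
    ∃ t, s < t ∧ SignChangeAt g c t := by
  have hneg : ∀ x ∈ Ioc 0 s, g x < 0 := fun x hx => by
    obtain ⟨y, hgy, hy⟩ := (h0.and (Ioc_mem_nhdsGT hx.1)).exists
    exact (hanti ⟨hy.1, hy.2.trans hx.2⟩ hx hy.2).trans_lt hgy
  obtain ⟨a, hga, ha⟩ := (h0.and (Ioo_mem_nhdsGT hc)).exists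
  obtain ⟨b, hgb, hb⟩ := (h1.and (Ioo_mem_nhdsLT ha.2)).exists
  obtain ⟨t, ht, hgt⟩ := intermediate_value_Ioo hb.1.le
    (hg.mono (Icc_subset_Ioo ha.1 hb.2)) ⟨hga, hgb⟩
  have htc : t ∈ Ioo 0 c := ⟨ha.1.trans ht.1, ht.2.trans hb.2⟩
  have hst : s < t := not_le.1 fun hts => (hneg t ⟨htc.1, hts⟩).ne hgt
  refine ⟨t, hst, htc, fun x hx => ?_, hgt, fun x hx => ?_⟩
  · rcases le_or_gt x s with hxs | hsx
    · exact hneg x ⟨hx.1, hxs⟩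
    · exact hgt ▸ hmono ⟨hsx, hx.2.trans htc.2⟩ ⟨hst, htc.2⟩ hx.2
  · exact hgt ▸ hmono ⟨hst, htc.2⟩ ⟨hst.trans hx.1, hx.2⟩ hx.1

theorem SignChangeAt.exists_signChangeAt_of_deriv {g : ℝ → ℝ} {c s : ℝ}
    (hs : SignChangeAt (deriv g) c s) (hg : ContinuousOn g (Ioo 0 c))
    (h0 : ∀ᶠ x in 𝓝[>] 0, g x < 0) (h1 : ∀ᶠ x in 𝓝[<] c, 0 < g x) :
    ∃ t, s < t ∧ SignChangeAt g c t :=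
  exists_signChangeAt (hs.1.1.trans hs.1.2) hg (hs.strictAntiOn_of_deriv hg).antitoneOn
    ((hs.strictMonoOn_of_deriv hg).mono Ioo_subset_Ico_self) h0 h1

theorem exists_signChangeAt_iteratedDeriv {f : ℝ → ℝ} {c : ℝ} {n : ℕ} (hc : 0 < c)
    (hcont : ∀ k ≤ n, ContinuousOn (iteratedDeriv k f) (Ioo 0 c))
    (hpos : ∀ x ∈ Ioo 0 c, 0 < iteratedDeriv (n + 1) f x)
    (h0 : ∀ k ≤ n, ∀ᶠ x in 𝓝[>] 0, iteratedDeriv k f x < 0)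
    (h1 : ∀ k ≤ n, ∀ᶠ x in 𝓝[<] c, 0 < iteratedDeriv k f x) :
    ∀ k ≤ n, ∃ t, SignChangeAt (iteratedDeriv k f) c t := by
  intro k hk
  induction hk using Nat.decreasingInduction with
  | self =>
    have hmono : StrictMonoOn (iteratedDeriv n f) (Ioo 0 c) :=
      strictMonoOn_of_deriv_pos (convex_Ioo 0 c) (hcont n le_rfl)
        (by simpa only [interior_Ioo, ← iteratedDeriv_succ] using hpos)
    obtain ⟨t, -, ht⟩ := exists_signChangeAt hc (hcont n le_rfl)
      (fun x hx => absurd hx.2 hx.1.not_ge) hmono (h0 n le_rfl) (h1 n le_rfl)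
    exact ⟨t, ht⟩
  | of_succ k hk ih =>
    obtain ⟨s, hs⟩ := ih
    rw [iteratedDeriv_succ] at hs
    obtain ⟨t, -, ht⟩ :=
      hs.exists_signChangeAt_of_deriv (hcont k hk.le) (h0 k hk.le) (h1 k hk.le)
    exact ⟨t, ht⟩

theorem stmt_16 (c : ℝ) (hc : 0 < c) (m : ℕ) (hm : 2 ≤ m) (f : ℝ → ℝ)
    (hdiff : ∀ k < m, Differentiable ℝ (iteratedDeriv k f))
    (ha : ∀ x ∈ Set.Ioo 0 c, 0 < iteratedDeriv m f x)
    (hb : ∃ δ > 0, ∀ x ∈ Set.Ioo 0 δ, ∀ k < m, iteratedDeriv k f x < 0)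
    (hcnb : ∃ δ > 0, ∀ x ∈ Set.Ioo (c - δ) c, ∀ k < m, iteratedDeriv k f x > 0) :
    ∃ t₀ ∈ Set.Ioo 0 c, ∃ x₀ ∈ Set.Ioo 0 c,
      f x₀ = 0 ∧ (∀ y ∈ Set.Ioo 0 c, f y = 0 → y = x₀) ∧
      t₀ < x₀ ∧ f t₀ < 0 ∧ deriv f t₀ = 0 ∧
      StrictAntiOn f (Set.Ioc 0 t₀) ∧ StrictMonoOn f (Set.Ico t₀ c) ∧
      (∀ t ∈ Set.Ioo 0 c, deriv f t = 0 → t = t₀) := by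
  obtain ⟨δ₀, hδ₀, hb⟩ := hb
  obtain ⟨δ₁, hδ₁, hcnb⟩ := hcnb
  obtain ⟨n, rfl⟩ : ∃ n, m = n + 1 := ⟨m - 1, by omega⟩
  have hcont k (hk : k ≤ n) : ContinuousOn (iteratedDeriv k f) (Ioo 0 c) :=
    (hdiff k (Nat.lt_succ_of_le hk)).continuous.continuousOn
  have h0 k (hk : k ≤ n) : ∀ᶠ x in 𝓝[>] 0, iteratedDeriv k f x < 0 :=
    eventually_of_mem (Ioo_mem_nhdsGT hδ₀) fun x hx => hb x hx k (Nat.lt_succ_of_le hk)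
  have h1 k (hk : k ≤ n) : ∀ᶠ x in 𝓝[<] c, 0 < iteratedDeriv k f x :=
    eventually_of_mem (Ioo_mem_nhdsLT (sub_lt_self c hδ₁)) fun x hx =>
      hcnb x hx k (Nat.lt_succ_of_le hk)
  obtain ⟨t₀, ht₀⟩ := exists_signChangeAt_iteratedDeriv hc hcont ha h0 h1 1 (by omega)
  rw [iteratedDeriv_one] at ht₀
  have hf : ContinuousOn f (Ioo 0 c) := by
    simpa only [iteratedDeriv_zero] using hcont 0 n.zero_le
  obtain ⟨x₀, ht₀x₀, hx₀⟩ := ht₀.exists_signChangeAt_of_deriv hf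
    (by simpa only [iteratedDeriv_zero] using h0 0 n.zero_le)
    (by simpa only [iteratedDeriv_zero] using h1 0 n.zero_le)
  exact ⟨t₀, ht₀.1, x₀, hx₀.1, hx₀.2.2.1, fun y hy => hx₀.eq_of_apply_eq_zero hy, ht₀x₀,
    hx₀.2.1 t₀ ⟨ht₀.1.1, ht₀x₀⟩, ht₀.2.2.1, ht₀.strictAntiOn_of_deriv hf,
    ht₀.strictMonoOn_of_deriv hf, fun t ht => ht₀.eq_of_apply_eq_zero ht⟩
end

section
/- For all x in (0, π/2), sin x / x < e^(-x²/6). -/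
set_option maxHeartbeats 1000000

open Real

-- exp(-t) ≥ 1 - t + t²/2 - t³/6 - 5t⁴/96 for 0 ≤ t ≤ 1
lemma exp_neg_lb {t : ℝ} (h0 : 0 ≤ t) (h1 : t ≤ 1) :
    1 - t + t^2/2 - t^3/6 - 5/96 * t^4 ≤ Real.exp (-t) := by
  have habs : |(-t)| ≤ 1 := by rw [abs_neg, abs_of_nonneg h0]; exact h1
  have h := Real.exp_bound habs (n := 4) (by norm_num)
  rw [abs_neg, abs_of_nonneg h0] at h
  norm_num [Finset.sum_range_succ, Nat.factorial] at h
  have h' := abs_le.mp h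
  nlinarith [h'.1, h'.2]

-- sin y ≥ y - y³/6 - 5y⁴/96 for 0 ≤ y ≤ 1
lemma sin_lb {y : ℝ} (h0 : 0 ≤ y) (h1 : y ≤ 1) :
    y - y^3/6 - 5/96 * y^4 ≤ Real.sin y := by
  have habs : |y| ≤ 1 := by rw [abs_of_nonneg h0]; exact h1
  have h := Real.sin_bound habs
  rw [abs_of_nonneg h0] at h
  have h' := abs_le.mp h
  nlinarith [h'.1, h'.2, pow_nonneg h0 4, mul_nonneg (pow_nonneg h0 4) (sub_nonneg.mpr h1)]

theorem stmt_19 : ∀ x ∈ Set.Ioo (0:ℝ) (Real.pi/2), Real.sin x / x < Real.exp (-x^2/6) := by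
  have hpi : Real.pi < 3.15 := by
    have := Real.pi_lt_d2
    linarith
  -- the function g x = x * exp(-x²/6) - sin x
  set g : ℝ → ℝ := fun x => x * Real.exp (-x^2/6) - Real.sin x with hg
  have hderiv : ∀ x : ℝ, HasDerivAt g
      (Real.exp (-x^2/6) + x * (Real.exp (-x^2/6) * (-(2*x)/6)) - Real.cos x) x := by
    intro x
    have h1 : HasDerivAt (fun x : ℝ => -x^2/6) (-(2*x)/6) x := by
      have : HasDerivAt (fun x : ℝ => x^2) (2*x) x := by
        simpa using hasDerivAt_pow 2 x
      simpa using (this.neg.div_const 6)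
    have h2 : HasDerivAt (fun x : ℝ => Real.exp (-x^2/6))
        (Real.exp (-x^2/6) * (-(2*x)/6)) x := (Real.hasDerivAt_exp _).comp x h1
    have h3 : HasDerivAt (fun x : ℝ => x * Real.exp (-x^2/6))
        (1 * Real.exp (-x^2/6) + x * (Real.exp (-x^2/6) * (-(2*x)/6))) x :=
      (hasDerivAt_id x).mul h2
    have h4 := h3.sub (Real.hasDerivAt_sin x)
    rw [one_mul] at h4; exact h4
  -- derivative is positive on (0, π/2)
  have hpos : ∀ x ∈ Set.Ioo (0:ℝ) (Real.pi/2),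
      0 < Real.exp (-x^2/6) + x * (Real.exp (-x^2/6) * (-(2*x)/6)) - Real.cos x := by
    rintro x ⟨hx0, hx2⟩
    have hx158 : x < 1.575 := by linarith
    set y := x/2 with hy
    have hy0 : 0 < y := by positivity
    have hy1 : y < 0.7875 := by rw [hy]; linarith
    -- cos x = 1 - 2 sin y ^ 2
    have hcosx : Real.cos x = 1 - 2 * Real.sin y ^ 2 := by
      have : x = 2 * y := by rw [hy]; ring
      rw [this, Real.cos_two_mul]
      have := Real.sin_sq_add_cos_sq y
      nlinarith [this]
    have hs : y - y^3/6 - 5/96 * y^4 ≤ Real.sin y := sin_lb hy0.le (by linarith)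
    have hy2 : y^2 < 0.7875 * y := by nlinarith
    have hy3 : y^3 < 0.7875 * y^2 := by nlinarith
    have hy4 : y^4 < 0.7875 * y^3 := by nlinarith
    have hsnn : (0:ℝ) ≤ y - y^3/6 - 5/96 * y^4 := by nlinarith
    have hsinsq : (y - y^3/6 - 5/96 * y^4)^2 ≤ Real.sin y ^ 2 := by
      nlinarith [hs, hsnn]
    have ht0 : (0:ℝ) ≤ x^2/6 := by positivity
    have ht1 : x^2/6 ≤ 1 := by nlinarith
    have hE : 1 - x^2/6 + (x^2/6)^2/2 - (x^2/6)^3/6 - 5/96 * (x^2/6)^4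
        ≤ Real.exp (-(x^2/6)) := exp_neg_lb ht0 ht1
    have hxy : x = 2*y := by rw [hy]; ring
    have hc : (0:ℝ) < 1 - x^2/3 := by nlinarith
    have hE' : (-x^2/6 : ℝ) = -(x^2/6) := by ring
    rw [hcosx, hE']
    have key : Real.exp (-(x^2/6)) + x * (Real.exp (-(x^2/6)) * (-(2*x)/6))
        = Real.exp (-(x^2/6)) * (1 - x^2/3) := by ring
    rw [key]
    have h5 : (1 - x^2/6 + (x^2/6)^2/2 - (x^2/6)^3/6 - 5/96 * (x^2/6)^4) * (1 - x^2/3)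
        ≤ Real.exp (-(x^2/6)) * (1 - x^2/3) :=
      mul_le_mul_of_nonneg_right hE hc.le
    have hquad : 0 < 4/9 - 5/24*y - 47/162*y^2 := by linarith [hy2]
    have hinner : 0 < 4/9 - 5/24*y - 47/162*y^2 + 5/144*y^3 + 281/4608*y^4 + 10/729*y^6 := by
      linarith [hquad, pow_pos hy0 3, pow_pos hy0 4, pow_pos hy0 6]
    have hQ : 0 < (1 - x^2/6 + (x^2/6)^2/2 - (x^2/6)^3/6 - 5/96 * (x^2/6)^4) * (1 - x^2/3)
        - (1 - 2 * (y - y^3/6 - 5/96 * y^4)^2) := by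
      rw [hxy]
      have hexp : (1 - (2*y)^2/6 + ((2*y)^2/6)^2/2 - ((2*y)^2/6)^3/6 - 5/96 * ((2*y)^2/6)^4) * (1 - (2*y)^2/3)
          - (1 - 2 * (y - y^3/6 - 5/96 * y^4)^2)
          = y^4 * (4/9 - 5/24*y - 47/162*y^2 + 5/144*y^3 + 281/4608*y^4 + 10/729*y^6) := by
        ring
      rw [hexp]
      exact mul_pos (pow_pos hy0 4) hinner
    linarith [h5, hsinsq, hQ]
  -- g is strictly monotone on [0, π/2]
  have hmono : StrictMonoOn g (Set.Icc 0 (Real.pi/2)) := by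
    apply strictMonoOn_of_deriv_pos (convex_Icc _ _)
    · apply Continuous.continuousOn
      fun_prop
    · intro x hx
      rw [interior_Icc] at hx
      rw [(hderiv x).deriv]
      exact hpos x hx
  rintro x ⟨hx0, hx2⟩
  have h0 : g 0 < g x := by
    apply hmono (Set.mem_Icc.mpr ⟨le_refl 0, by positivity⟩)
      (Set.mem_Icc.mpr ⟨hx0.le, hx2.le⟩) hx0
  simp only [hg] at h0
  have : Real.sin x < x * Real.exp (-x^2/6) := by
    simp at h0
    linarith
  rw [div_lt_iff₀ hx0]
  linarith [this]
end
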